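/- Under the conditions making the expert's support-constrained optimality meaningful, the feasible set admits the union representation: R_{p,π^E} = ⋃_{π' ∈ [π^E]} R̄_{p,π'}, where [π^E] is the set of policies agreeing with π^E on its support S^{p,π^E}, R_{p,π^E} := {r : J(π^E; μ₀, p, r) = max_π J(π; μ₀, p, r)}, and R̄_{p,π'} := {r : ∀(s,h) ∈ S×[H], ∀a, E_{a'~π'_h(·|s)} Q*_h(s,a'; p, r) = max_{a''} Q*_h(s,a''; p, r)}. In particular it suffices to take the union over deterministic policies in [π^E]. -/
import Mathlib


open Finset

/-- Optimal `Q`-value recursion with `t` remaining stages. -/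
noncomputable def QstarAux {S A : Type*} [Fintype S] [Fintype A] [Nonempty A]
    (p : ℕ → S → A → S → ℝ) (r : ℕ → S → A → ℝ) : ℕ → ℕ → S → A → ℝ
  | 0, h, s, a => r h s a
  | t + 1, h, s, a =>
      r h s a + ∑ s' : S, p h s a s' *
        (univ.sup' univ_nonempty fun a' => QstarAux p r t (h + 1) s' a')

/-- The optimal Q-function `Q*_h` over horizon `H` (stages `0, …, H−1`). -/
noncomputable def Qstar {S A : Type*} [Fintype S] [Fintype A] [Nonempty A] (H : ℕ)
    (p : ℕ → S → A → S → ℝ) (r : ℕ → S → A → ℝ) (h : ℕ) : S → A → ℝ :=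
  QstarAux p r (H - 1 - h) h

/-- `Q^π`-recursion with `t` remaining stages. -/
noncomputable def QpolAux {S A : Type*} [Fintype S] [Fintype A]
    (p : ℕ → S → A → S → ℝ) (π : ℕ → S → A → ℝ) (r : ℕ → S → A → ℝ) :
    ℕ → ℕ → S → A → ℝ
  | 0, h, s, a => r h s a
  | t + 1, h, s, a =>
      r h s a + ∑ s' : S, p h s a s' *
        ∑ a' : A, π (h + 1) s' a' * QpolAux p π r t (h + 1) s' a'

/-- State visitation distribution `ρ^{p,π}_h(s)` from initial distribution `μ0`. -/
noncomputable def visit {S A : Type*} [Fintype S] [Fintype A] (μ0 : S → ℝ)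
    (p : ℕ → S → A → S → ℝ) (π : ℕ → S → A → ℝ) : ℕ → S → ℝ
  | 0, s => μ0 s
  | h + 1, s' => ∑ s : S, ∑ a : A, visit μ0 p π h s * π h s a * p h s a s'

/-- Expected return `J(π; μ0, p, r)` over horizon `H`. -/
noncomputable def Jval {S A : Type*} [Fintype S] [Fintype A] (H : ℕ) (μ0 : S → ℝ)
    (p : ℕ → S → A → S → ℝ) (π : ℕ → S → A → ℝ) (r : ℕ → S → A → ℝ) : ℝ :=
  ∑ s : S, μ0 s * ∑ a : A, π 0 s a * QpolAux p π r (H - 1) 0 s a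

/-- A stochastic policy: each `π_h(·|s)` is a probability vector. -/
def IsPolicy {S A : Type*} [Fintype A] (π : ℕ → S → A → ℝ) : Prop :=
  ∀ h s, (∀ a, 0 ≤ π h s a) ∧ ∑ a : A, π h s a = 1

/-- The stochastic policy induced by a deterministic policy. -/
noncomputable def detPol {S A : Type*} [DecidableEq A] (πE : ℕ → S → A) :
    ℕ → S → A → ℝ :=
  fun h s a => if a = πE h s then 1 else 0


section Aux
variable {S A : Type*} [Fintype S] [Fintype A] [Nonempty A]

/-- auxiliary: optimal value with t remaining stages -/
noncomputable def VstAux (p : ℕ → S → A → S → ℝ) (r : ℕ → S → A → ℝ) (t h : ℕ) (s : S) : ℝ :=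
  univ.sup' univ_nonempty fun a => QstarAux p r t h s a

lemma visit_nonneg (μ0 : S → ℝ) (hμ0 : ∀ s, 0 ≤ μ0 s) (p : ℕ → S → A → S → ℝ)
    (hp : ∀ h s a, ∀ s', 0 ≤ p h s a s') (π : ℕ → S → A → ℝ) (hπ : IsPolicy π) :
    ∀ h s, 0 ≤ visit μ0 p π h s := by
  intro h
  induction h with
  | zero => exact hμ0
  | succ n ih =>
    intro s'
    refine Finset.sum_nonneg fun s _ => Finset.sum_nonneg fun a _ => ?_
    exact mul_nonneg (mul_nonneg (ih s) ((hπ n s).1 a)) (hp n s a s')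

lemma step_rec (μ0 : S → ℝ) (p : ℕ → S → A → S → ℝ) (π : ℕ → S → A → ℝ)
    (r : ℕ → S → A → ℝ) (t h : ℕ) :
    ∑ s : S, visit μ0 p π h s *
        (VstAux p r (t+1) h s - ∑ a : A, π h s a * QpolAux p π r (t+1) h s a)
    = ∑ s : S, visit μ0 p π h s *
        (VstAux p r (t+1) h s - ∑ a : A, π h s a * QstarAux p r (t+1) h s a)
      + ∑ s' : S, visit μ0 p π (h+1) s' *
        (VstAux p r t (h+1) s' - ∑ a : A, π (h+1) s' a * QpolAux p π r t (h+1) s' a) := by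
  have key : ∀ s a, QstarAux p r (t+1) h s a - QpolAux p π r (t+1) h s a
      = ∑ s' : S, p h s a s' *
          (VstAux p r t (h+1) s' - ∑ a' : A, π (h+1) s' a' * QpolAux p π r t (h+1) s' a') := by
    intro s a
    simp only [QstarAux, QpolAux, VstAux]
    rw [add_sub_add_left_eq_sub, ← Finset.sum_sub_distrib]
    exact Finset.sum_congr rfl fun s' _ => by ring
  have e1 : ∑ s : S, visit μ0 p π h s *
        (VstAux p r (t+1) h s - ∑ a : A, π h s a * QpolAux p π r (t+1) h s a)
      = ∑ s : S, visit μ0 p π h s *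
          (VstAux p r (t+1) h s - ∑ a : A, π h s a * QstarAux p r (t+1) h s a)
        + ∑ s : S, ∑ a : A, ∑ s' : S, visit μ0 p π h s * π h s a * p h s a s' *
            (VstAux p r t (h+1) s' - ∑ a' : A, π (h+1) s' a' * QpolAux p π r t (h+1) s' a') := by
    rw [← Finset.sum_add_distrib]
    refine Finset.sum_congr rfl fun s _ => ?_
    have : ∑ a : A, ∑ s' : S, visit μ0 p π h s * π h s a * p h s a s' *
            (VstAux p r t (h+1) s' - ∑ a' : A, π (h+1) s' a' * QpolAux p π r t (h+1) s' a')
        = visit μ0 p π h s * ∑ a : A, π h s a *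
            (QstarAux p r (t+1) h s a - QpolAux p π r (t+1) h s a) := by
      rw [Finset.mul_sum]
      refine Finset.sum_congr rfl fun a _ => ?_
      rw [key s a, Finset.mul_sum, Finset.mul_sum]
      exact Finset.sum_congr rfl fun s' _ => by ring
    rw [this]
    have h2 : ∑ a : A, π h s a * (QstarAux p r (t+1) h s a - QpolAux p π r (t+1) h s a)
        = (∑ a : A, π h s a * QstarAux p r (t+1) h s a)
          - ∑ a : A, π h s a * QpolAux p π r (t+1) h s a := by
      rw [← Finset.sum_sub_distrib]; exact Finset.sum_congr rfl fun a _ => by ring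
    rw [h2]; ring
  rw [e1]
  congr 1
  set W : S → ℝ := fun s' =>
    VstAux p r t (h+1) s' - ∑ a' : A, π (h+1) s' a' * QpolAux p π r t (h+1) s' a' with hW
  calc ∑ s : S, ∑ a : A, ∑ s' : S, visit μ0 p π h s * π h s a * p h s a s' * W s'
      = ∑ s : S, ∑ s' : S, ∑ a : A, visit μ0 p π h s * π h s a * p h s a s' * W s' :=
        Finset.sum_congr rfl fun s _ => Finset.sum_comm
    _ = ∑ s' : S, ∑ s : S, ∑ a : A, visit μ0 p π h s * π h s a * p h s a s' * W s' :=
        Finset.sum_comm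
    _ = ∑ s' : S, visit μ0 p π (h+1) s' * W s' := by
        refine Finset.sum_congr rfl fun s' _ => ?_
        rw [show visit μ0 p π (h+1) s'
            = ∑ s : S, ∑ a : A, visit μ0 p π h s * π h s a * p h s a s' from rfl,
          Finset.sum_mul]
        exact Finset.sum_congr rfl fun s _ => by rw [Finset.sum_mul]

lemma ident (μ0 : S → ℝ) (p : ℕ → S → A → S → ℝ) (π : ℕ → S → A → ℝ)
    (r : ℕ → S → A → ℝ) :
    ∀ t h, ∑ s : S, visit μ0 p π h s *
        (VstAux p r t h s - ∑ a : A, π h s a * QpolAux p π r t h s a)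
      = ∑ k ∈ range (t+1), ∑ s : S, visit μ0 p π (h+k) s *
          (VstAux p r (t-k) (h+k) s - ∑ a : A, π (h+k) s a * QstarAux p r (t-k) (h+k) s a) := by
  intro t
  induction t with
  | zero =>
    intro h
    rw [Finset.sum_range_one]
    rfl
  | succ t ih =>
    intro h
    rw [step_rec, ih (h+1)]
    conv_rhs => rw [Finset.sum_range_succ']
    rw [add_comm]
    congr 1
    · refine Finset.sum_congr rfl fun k hk => ?_
      have h1 : h + 1 + k = h + (k + 1) := by omega
      have h2 : t - k = t + 1 - (k + 1) := by omega
      rw [h1, h2]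

lemma avg_le_sup (w f : A → ℝ) (hw0 : ∀ a, 0 ≤ w a) (hw1 : ∑ a : A, w a = 1) :
    ∑ a : A, w a * f a ≤ univ.sup' univ_nonempty f := by
  calc ∑ a : A, w a * f a ≤ ∑ a : A, w a * univ.sup' univ_nonempty f :=
        Finset.sum_le_sum fun a _ =>
          mul_le_mul_of_nonneg_left (Finset.le_sup' f (mem_univ a)) (hw0 a)
    _ = univ.sup' univ_nonempty f := by rw [← Finset.sum_mul, hw1, one_mul]

lemma sum_peak [DecidableEq A] (w f : A → ℝ) (hw0 : ∀ a, 0 ≤ w a)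
    (hw1 : ∑ a : A, w a = 1) (c : A) (hc : w c = 1) :
    ∑ a : A, w a * f a = f c := by
  have h0 : ∑ b ∈ univ \ {c}, w b = 0 := by
    have := Finset.sum_eq_sum_sdiff_singleton_add (Finset.mem_univ c) w
    rw [hc] at this; linarith
  have hz : ∀ b, b ≠ c → w b = 0 := fun b hb =>
    (Finset.sum_eq_zero_iff_of_nonneg (fun x _ => hw0 x)).mp h0 b (by simp [hb])
  rw [Finset.sum_eq_single c (fun b _ hb => by rw [hz b hb, zero_mul])
    (fun h => absurd (mem_univ c) h), hc, one_mul]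

lemma sum_detPol [DecidableEq A] (πE : ℕ → S → A) (h : ℕ) (s : S) (f : A → ℝ) :
    ∑ a : A, detPol πE h s a * f a = f (πE h s) := by
  simp [detPol, ite_mul]

lemma isPolicy_detPol [DecidableEq A] (πE : ℕ → S → A) : IsPolicy (detPol πE) := by
  intro h s
  constructor
  · intro a; unfold detPol; split <;> norm_num
  · simp [detPol]

lemma J_identity (H : ℕ) (hH : 1 ≤ H) (μ0 : S → ℝ) (p : ℕ → S → A → S → ℝ)
    (π : ℕ → S → A → ℝ) (r : ℕ → S → A → ℝ) :
    (∑ s : S, μ0 s * VstAux p r (H-1) 0 s) - Jval H μ0 p π r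
    = ∑ k ∈ range H, ∑ s : S, visit μ0 p π k s *
        (VstAux p r (H-1-k) k s - ∑ a : A, π k s a * Qstar H p r k s a) := by
  have h0 := ident μ0 p π r (H-1) 0
  rw [Nat.sub_add_cancel hH] at h0
  simp only [Nat.zero_add] at h0
  calc (∑ s : S, μ0 s * VstAux p r (H-1) 0 s) - Jval H μ0 p π r
      = ∑ s : S, visit μ0 p π 0 s *
          (VstAux p r (H-1) 0 s - ∑ a : A, π 0 s a * QpolAux p π r (H-1) 0 s a) := by
        rw [Jval, ← Finset.sum_sub_distrib]
        exact Finset.sum_congr rfl fun s _ => by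
          rw [show visit μ0 p π 0 s = μ0 s from rfl]; ring
    _ = _ := by
        rw [h0]
        exact Finset.sum_congr rfl fun k _ => Finset.sum_congr rfl fun s _ => rfl

lemma crux (H : ℕ) (hH : 1 ≤ H) (μ0 : S → ℝ) (hμ0 : ∀ s, 0 ≤ μ0 s)
    (p : ℕ → S → A → S → ℝ) (hp : ∀ h s a, (∀ s', 0 ≤ p h s a s') ∧ ∑ s' : S, p h s a s' = 1)
    (r : ℕ → S → A → ℝ) (π : ℕ → S → A → ℝ) (hπ : IsPolicy π) :
    Jval H μ0 p π r = (∑ s : S, μ0 s * VstAux p r (H-1) 0 s) ↔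
      ∀ k < H, ∀ s, 0 < visit μ0 p π k s →
        ∑ a : A, π k s a * Qstar H p r k s a = VstAux p r (H-1-k) k s := by
  have hid := J_identity H hH μ0 p π r
  have hvn := visit_nonneg μ0 hμ0 p (fun h s a => (hp h s a).1) π hπ
  have hgap : ∀ k s, 0 ≤ VstAux p r (H-1-k) k s - ∑ a : A, π k s a * Qstar H p r k s a :=
    fun k s => sub_nonneg.mpr (avg_le_sup (π k s) _ (hπ k s).1 (hπ k s).2)
  constructor
  · intro hJ k hk s hv
    have hsum : ∑ k ∈ range H, ∑ s : S, visit μ0 p π k s *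
        (VstAux p r (H-1-k) k s - ∑ a : A, π k s a * Qstar H p r k s a) = 0 := by
      rw [← hid, hJ, sub_self]
    have h1 := (Finset.sum_eq_zero_iff_of_nonneg (fun k _ =>
      Finset.sum_nonneg fun s _ => mul_nonneg (hvn k s) (hgap k s))).mp hsum k
      (Finset.mem_range.mpr hk)
    have h2 := (Finset.sum_eq_zero_iff_of_nonneg (fun s _ =>
      mul_nonneg (hvn k s) (hgap k s))).mp h1 s (mem_univ s)
    rcases mul_eq_zero.mp h2 with h | h
    · exact absurd h (ne_of_gt hv)
    · linarith
  · intro hz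
    have hsum : ∑ k ∈ range H, ∑ s : S, visit μ0 p π k s *
        (VstAux p r (H-1-k) k s - ∑ a : A, π k s a * Qstar H p r k s a) = 0 := by
      refine Finset.sum_eq_zero fun k hk => Finset.sum_eq_zero fun s _ => ?_
      rcases (hvn k s).eq_or_lt with h | h
      · rw [← h, zero_mul]
      · rw [hz k (Finset.mem_range.mp hk) s h, sub_self, mul_zero]
    linarith [hid, hsum]

lemma Jle (H : ℕ) (hH : 1 ≤ H) (μ0 : S → ℝ) (hμ0 : ∀ s, 0 ≤ μ0 s)
    (p : ℕ → S → A → S → ℝ) (hp : ∀ h s a, (∀ s', 0 ≤ p h s a s') ∧ ∑ s' : S, p h s a s' = 1)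
    (r : ℕ → S → A → ℝ) (π : ℕ → S → A → ℝ) (hπ : IsPolicy π) :
    Jval H μ0 p π r ≤ ∑ s : S, μ0 s * VstAux p r (H-1) 0 s := by
  have hid := J_identity H hH μ0 p π r
  have hvn := visit_nonneg μ0 hμ0 p (fun h s a => (hp h s a).1) π hπ
  have hgap : ∀ k s, 0 ≤ VstAux p r (H-1-k) k s - ∑ a : A, π k s a * Qstar H p r k s a :=
    fun k s => sub_nonneg.mpr (avg_le_sup (π k s) _ (hπ k s).1 (hπ k s).2)
  have hnn : 0 ≤ ∑ k ∈ range H, ∑ s : S, visit μ0 p π k s *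
      (VstAux p r (H-1-k) k s - ∑ a : A, π k s a * Qstar H p r k s a) :=
    Finset.sum_nonneg fun k _ => Finset.sum_nonneg fun s _ =>
      mul_nonneg (hvn k s) (hgap k s)
  linarith

end Aux

/-- Union representation of the feasible set:
`r ∈ R_{p,π^E}` (i.e. `J(π^E; μ0, p, r) = max_π J(π; μ0, p, r)`) **iff** there is a
policy `π'` agreeing with `π^E` on the support `S^{p,π^E}` such that `π'` plays
`Q*`-optimally in every state-stage pair (`E_{a~π'_h(·|s)} Q*_h(s,a) = max_a Q*_h(s,a)`),
i.e. `R_{p,π^E} = ⋃_{π' ∈ [π^E]} R̄_{p,π'}`. In particular, it suffices to take the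
union over deterministic policies in `[π^E]` (second conjunct). -/
theorem stmt19 {S A : Type*} [Fintype S] [Fintype A] [Nonempty A] [DecidableEq A]
    (H : ℕ) (hH : 1 ≤ H)
    (μ0 : S → ℝ) (hμ0 : (∀ s, 0 ≤ μ0 s) ∧ ∑ s : S, μ0 s = 1)
    (p : ℕ → S → A → S → ℝ)
    (hp : ∀ h s a, (∀ s', 0 ≤ p h s a s') ∧ ∑ s' : S, p h s a s' = 1)
    (πE : ℕ → S → A) (r : ℕ → S → A → ℝ) :
    ((∀ π', IsPolicy π' → Jval H μ0 p π' r ≤ Jval H μ0 p (detPol πE) r) ↔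
      ∃ π' : ℕ → S → A → ℝ, IsPolicy π' ∧
        (∀ h < H, ∀ s, 0 < visit μ0 p (detPol πE) h s → π' h s (πE h s) = 1) ∧
        (∀ h < H, ∀ s, ∑ a : A, π' h s a * Qstar H p r h s a =
          univ.sup' univ_nonempty fun a' => Qstar H p r h s a'))
    ∧ ((∀ π', IsPolicy π' → Jval H μ0 p π' r ≤ Jval H μ0 p (detPol πE) r) →
      ∃ πd : ℕ → S → A,
        (∀ h < H, ∀ s, 0 < visit μ0 p (detPol πE) h s → πd h s = πE h s) ∧
        (∀ h < H, ∀ s, Qstar H p r h s (πd h s) =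
          univ.sup' univ_nonempty fun a' => Qstar H p r h s a')) := by
  classical
  obtain ⟨hμ0n, -⟩ := hμ0
  -- greedy action
  have gex : ∀ h s, ∃ b : A,
      (univ.sup' univ_nonempty fun a => Qstar H p r h s a) = Qstar H p r h s b := by
    intro h s
    obtain ⟨b, -, hb⟩ := Finset.exists_mem_eq_sup' univ_nonempty (fun a => Qstar H p r h s a)
    exact ⟨b, hb⟩
  choose greedy hgreedy using gex
  have hVQ : ∀ k s, VstAux p r (H-1-k) k s
      = univ.sup' univ_nonempty fun a => Qstar H p r k s a := fun _ _ => rfl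
  have hEpol := isPolicy_detPol (S := S) πE
  have hGpol := isPolicy_detPol (S := S) greedy
  have hJg : Jval H μ0 p (detPol greedy) r = ∑ s : S, μ0 s * VstAux p r (H-1) 0 s := by
    rw [crux H hH μ0 hμ0n p hp r _ hGpol]
    intro k hk s hv
    rw [sum_detPol, hVQ, hgreedy]
  -- key equivalence for optimality of πE
  have hiff : (∀ π', IsPolicy π' → Jval H μ0 p π' r ≤ Jval H μ0 p (detPol πE) r) ↔
      (∀ k < H, ∀ s, 0 < visit μ0 p (detPol πE) k s →
        Qstar H p r k s (πE k s) = VstAux p r (H-1-k) k s) := by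
    constructor
    · intro hopt
      have hE : Jval H μ0 p (detPol πE) r = ∑ s : S, μ0 s * VstAux p r (H-1) 0 s :=
        le_antisymm (Jle H hH μ0 hμ0n p hp r _ hEpol)
          (hJg ▸ hopt (detPol greedy) hGpol)
      have := (crux H hH μ0 hμ0n p hp r _ hEpol).mp hE
      intro k hk s hv
      have h2 := this k hk s hv
      rwa [sum_detPol] at h2
    · intro hz π'' hπ''
      have hE : Jval H μ0 p (detPol πE) r = ∑ s : S, μ0 s * VstAux p r (H-1) 0 s := by
        rw [crux H hH μ0 hμ0n p hp r _ hEpol]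
        intro k hk s hv
        rw [sum_detPol]
        exact hz k hk s hv
      rw [hE]
      exact Jle H hH μ0 hμ0n p hp r _ hπ''
  constructor
  · constructor
    · intro hopt
      have hz := hiff.mp hopt
      refine ⟨fun h s a => if 0 < visit μ0 p (detPol πE) h s then detPol πE h s a
        else detPol greedy h s a, ?_, ?_, ?_⟩
      · intro h s
        by_cases hv : 0 < visit μ0 p (detPol πE) h s
        · simp only [if_pos hv]; exact hEpol h s
        · simp only [if_neg hv]; exact hGpol h s
      · intro h hh s hv
        simp [hv, detPol]
      · intro h hh s
        by_cases hv : 0 < visit μ0 p (detPol πE) h s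
        · simp only [if_pos hv]
          rw [sum_detPol, ← hVQ]
          exact hz h hh s hv
        · simp only [if_neg hv]
          rw [sum_detPol, hgreedy]
    · rintro ⟨π', hpol, hagree, hopt'⟩
      apply hiff.mpr
      intro k hk s hv
      have h1 := hagree k hk s hv
      have h2 := hopt' k hk s
      rw [sum_peak (π' k s) _ (hpol k s).1 (hpol k s).2 (πE k s) h1] at h2
      rw [hVQ]
      exact h2
  · intro hopt
    have hz := hiff.mp hopt
    refine ⟨fun h s => if 0 < visit μ0 p (detPol πE) h s then πE h s else greedy h s,
      ?_, ?_⟩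
    · intro h hh s hv
      simp only [if_pos hv]
    · intro h hh s
      by_cases hv : 0 < visit μ0 p (detPol πE) h s
      · simp only [if_pos hv]
        rw [← hVQ]
        exact hz h hh s hv
      · simp only [if_neg hv]
        exact (hgreedy h s).symm
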